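/- Let b_n be the number of binary trees with multiplicities of size n (so b_0 = 1 for the empty tree, b_1 = 1, b_2 = 3, b_3 = 10, b_4 = 36, b_5 = 137). Then the formal power series S(t) = Σ_{n≥0} b_n tⁿ over ℚ satisfies (1 − t)·(S(t) − 1) = t·S(t)², equivalently t·S(t)² − (1 − t)·S(t) + (1 − t) = 0. -/

import Mathlib

open scoped Classical

/-- Words over the positive integers. -/
abbrev Word : Type := List ℕ+

/-- Evaluation of a word: number of occurrences of each letter. -/
def ev (w : Word) : ℕ+ → ℕ := fun a => w.count a

/-- A monoid congruence on the free monoid `(ℕ⁺)*`. -/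
def IsCongruence (r : Word → Word → Prop) : Prop :=
  Equivalence r ∧ ∀ u v u' v', r u v → r u' v' → r (u ++ u') (v ++ v')

/-- Restriction of a word to the letters belonging to a set `I`. -/
noncomputable def restrictTo (I : Set ℕ+) (w : Word) : Word :=
  w.filter fun a => decide (a ∈ I)

/-- `I` is an interval (order-convex subset) of `ℕ⁺`. -/
def IsIntervalSet (I : Set ℕ+) : Prop :=
  ∀ ⦃a b c : ℕ+⦄, a ∈ I → c ∈ I → a ≤ b → b ≤ c → b ∈ I

/-- Compatibility with restriction to alphabet intervals. -/
def CompatRestrict (r : Word → Word → Prop) : Prop :=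
  ∀ I : Set ℕ+, IsIntervalSet I → ∀ u v, r u v → r (restrictTo I u) (restrictTo I v)

/-- `r` is a `φ`-congruence. -/
def IsPhiCongruence (φ : Word → Word) (r : Word → Word → Prop) : Prop :=
  ∀ u v, r u v ↔ (r (φ u) (φ v) ∧ ev u = ev v)

/-- Standardization. -/
def std (w : Word) : Word :=
  (List.range w.length).map fun i =>
    ⟨((List.range w.length).countP fun j =>
        decide (w.getD j 1 < w.getD i 1 ∨ (w.getD j 1 = w.getD i 1 ∧ j < i))) + 1,
      Nat.succ_pos _⟩

/-- Packing. -/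
def pack (w : Word) : Word :=
  w.map fun a => ⟨(w.dedup.countP fun b => decide (b < a)) + 1, Nat.succ_pos _⟩

theorem parkBad_ex (w : Word) :
    ∃ d : ℕ, 1 ≤ d ∧ (w.countP fun a : ℕ+ => decide ((a : ℕ) ≤ d)) < d :=
  ⟨w.length + 1, Nat.succ_le_succ (Nat.zero_le _), by
    have h : w.countP (fun a : ℕ+ => decide ((a : ℕ) ≤ w.length + 1)) ≤ w.length :=
      List.countP_le_length
    omega⟩

/-- The smallest `d ≥ 1` such that fewer than `d` letters of `w` are `≤ d`. -/
noncomputable def parkBad (w : Word) : ℕ := Nat.find (parkBad_ex w)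

/-- One pass of the parkization procedure, with fuel. -/
noncomputable def parkAux : ℕ → Word → Word
  | 0, w => w
  | f + 1, w =>
    if parkBad w ≤ w.length then
      parkAux f (w.map fun a : ℕ+ => if parkBad w < (a : ℕ) then (a - 1 : ℕ+) else a)
    else w

/-- Parkization. The fuel `(sum of the letters)` always suffices,
since every pass strictly decreases the sum of the letters. -/
noncomputable def park (w : Word) : Word := parkAux (w.map fun a => (a : ℕ)).sum w

/-- Smallest monoid congruence containing `base`. -/
def CongClosure (base : Word → Word → Prop) (u v : Word) : Prop :=
  ∀ r : Word → Word → Prop, IsCongruence r → (∀ x y, base x y → r x y) → r u v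

def sylvBase (x y : Word) : Prop :=
  ∃ (a b c : ℕ+) (v : Word), a ≤ b ∧ b < c ∧
    x = a :: c :: (v ++ [b]) ∧ y = c :: a :: (v ++ [b])

/-- The sylvester congruence. -/
def sylv : Word → Word → Prop := CongClosure sylvBase

def stalBase (x y : Word) : Prop :=
  ∃ (a b : ℕ+) (v : Word), x = b :: a :: (v ++ [b]) ∧ y = a :: b :: (v ++ [b])

/-- The stalactic congruence. -/
def stal : Word → Word → Prop := CongClosure stalBase

def sylvSharpBase (x y : Word) : Prop :=
  ∃ (a b c : ℕ+) (v : Word), a < b ∧ b ≤ c ∧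
    x = b :: (v ++ [a, c]) ∧ y = b :: (v ++ [c, a])

/-- The #-sylvester congruence. -/
def sylvSharp : Word → Word → Prop := CongClosure sylvSharpBase

/-- The taïga congruence: join of the sylvester and stalactic congruences. -/
def taiga : Word → Word → Prop := CongClosure fun u v => sylv u v ∨ stal u v

/-- Planar binary trees with letter labels. -/
inductive BT : Type where
  | leaf : BT
  | node : BT → ℕ+ → BT → BT
deriving DecidableEq

/-- Binary search tree insertion of a letter. -/
def BT.insert : BT → ℕ+ → BT
  | .leaf, l => .node .leaf l .leaf
  | .node L b R, l => if l ≤ b then .node (L.insert l) b R else .node L b (R.insert l)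

/-- Binary search tree of a word: insert the letters from right to left. -/
def bst (w : Word) : BT := w.foldr (fun l t => t.insert l) .leaf

/-- Planar binary trees labelled by a letter and a multiplicity. -/
inductive BSTM : Type where
  | leaf : BSTM
  | node : BSTM → ℕ+ → ℕ+ → BSTM → BSTM   -- left, letter, multiplicity, right
deriving DecidableEq

/-- Insertion of a letter into a binary search tree with multiplicities. -/
def BSTM.insert : BSTM → ℕ+ → BSTM
  | .leaf, l => .node .leaf l 1 .leaf
  | .node L l' k R, l =>
    if l = l' then .node L l' (k + 1) R
    else if l < l' then .node (L.insert l) l' k R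
    else .node L l' k (R.insert l)

/-- The `P`-symbol: insert the letters of `w` from right to left. -/
def Pmap (w : Word) : BSTM := w.foldr (fun l t => t.insert l) .leaf

/-- Letters of a BSTM in left-to-right (infix) order. -/
def BSTM.letters : BSTM → List ℕ+
  | .leaf => []
  | .node L l _ R => L.letters ++ l :: R.letters

/-- The binary search tree property for a BSTM. -/
def BSTM.IsSearchTree : BSTM → Prop
  | .leaf => True
  | .node L l _ R =>
      (∀ x ∈ L.letters, x < l) ∧ (∀ x ∈ R.letters, l < x) ∧
        L.IsSearchTree ∧ R.IsSearchTree

/-- Total multiplicity of a letter in a BSTM. -/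
def BSTM.mult : BSTM → ℕ+ → ℕ
  | .leaf, _ => 0
  | .node L l k R, a => L.mult a + (if a = l then (k : ℕ) else 0) + R.mult a

/-- Size of a BSTM: sum of the multiplicities. -/
def BSTM.size : BSTM → ℕ
  | .leaf => 0
  | .node L _ k R => L.size + (k : ℕ) + R.size

/-- Planar binary trees with multiplicities. -/
inductive BTM : Type where
  | leaf : BTM
  | node : BTM → ℕ+ → BTM → BTM
deriving DecidableEq

/-- Size of a BTM: sum of the multiplicities. -/
def BTM.size : BTM → ℕ
  | .leaf => 0
  | .node L k R => L.size + (k : ℕ) + R.size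

/-- Number of nodes of a BTM. -/
def BTM.numNodes : BTM → ℕ
  | .leaf => 0
  | .node L _ R => L.numNodes + 1 + R.numNodes

/-- Forgetting the letters of a BSTM gives a BTM. -/
def forgetLetters : BSTM → BTM
  | .leaf => .leaf
  | .node L _ k R => .node (forgetLetters L) k (forgetLetters R)

/-- The `B`-symbol: the BTM underlying `P(w)`. -/
def Bmap (w : Word) : BTM := forgetLetters (Pmap w)

/-- A packed word: its set of letters is `{1, …, k}` for some `k`. -/
def IsPacked (w : Word) : Prop := ∀ a ∈ w, ∀ b : ℕ+, b ≤ a → b ∈ w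

/-- Number of packed words inserting to the BTM `T`. -/
noncomputable def fT (T : BTM) : ℕ :=
  Set.ncard {w : Word | IsPacked w ∧ Bmap w = T}

/-- The hook-type product over the subtrees of a BTM. -/
def hookProd : BTM → ℕ
  | .leaf => 1
  | .node L k R =>
      (BTM.node L k R).size * ((k : ℕ) - 1).factorial * hookProd L * hookProd R

/-- Label the nodes of a BTM in infix order starting from a given letter;
returns the labelled tree and the next unused letter. -/
def infixLabelAux : BTM → ℕ+ → BSTM × ℕ+
  | .leaf, n => (.leaf, n)
  | .node L k R, n =>
    let p := infixLabelAux L n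
    let q := infixLabelAux R (p.2 + 1)
    (.node p.1 p.2 k q.1, q.2)

/-- Label the nodes of a BTM by `1, …, k` in infix order. -/
def infixLabel (T : BTM) : BSTM := (infixLabelAux T 1).1

/-- Number of binary trees with multiplicities of size `n`. -/
noncomputable def bNum (n : ℕ) : ℕ := Nat.card {T : BTM // T.size = n}

/-- Generating series of binary trees with multiplicities, counted by size. -/
noncomputable def Sgen : PowerSeries ℚ := PowerSeries.mk fun n => (bNum n : ℚ)

/-!
Cut a nonempty tree at its root. Either the root has multiplicity `1` and carries two arbitrary
subtrees, which contributes `t * S²`, or lowering the root multiplicity by one leaves a nonempty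
tree, which contributes `t * (S - 1)`. Hence `S - 1 = t * S² + t * (S - 1)`, and the first
coefficients follow from the recurrence `b (n + 2) = ∑_{i + j = n + 1} b i * b j + b (n + 1)`.
-/

open Finset PowerSeries

def subtypeAddEqEquivSigmaAntidiagonal {α : Type*} (f : α → ℕ) (n : ℕ) :
    {p : α × α // f p.1 + f p.2 = n} ≃
      Σ ij : antidiagonal n, {a // f a = ij.1.1} × {a // f a = ij.1.2} where
  toFun p := ⟨⟨(f p.1.1, f p.1.2), mem_antidiagonal.2 p.2⟩, ⟨p.1.1, rfl⟩, ⟨p.1.2, rfl⟩⟩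
  invFun q := ⟨(q.2.1, q.2.2), by rw [q.2.1.2, q.2.2.2]; exact mem_antidiagonal.1 q.1.2⟩
  left_inv _ := rfl
  right_inv := by
    rintro ⟨⟨⟨i, j⟩, _⟩, ⟨_, h₁⟩, ⟨_, h₂⟩⟩
    dsimp only at h₁ h₂
    subst h₁ h₂
    rfl

theorem card_subtype_add_eq_sum_antidiagonal {α : Type*} (f : α → ℕ) (n : ℕ)
    [∀ i, Finite {a // f a = i}] :
    Nat.card {p : α × α // f p.1 + f p.2 = n} =
      ∑ ij ∈ antidiagonal n, Nat.card {a // f a = ij.1} * Nat.card {a // f a = ij.2} := by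
  rw [Nat.card_congr (subtypeAddEqEquivSigmaAntidiagonal f n), Nat.card_sigma]
  simp only [Nat.card_prod]
  exact sum_coe_sort (antidiagonal n) fun ij =>
    Nat.card {a // f a = ij.1} * Nat.card {a // f a = ij.2}

theorem finite_subtype_add_eq {α : Type*} (f : α → ℕ) (n : ℕ)
    (h : ∀ i ≤ n, Finite {a // f a = i}) : Finite {p : α × α // f p.1 + f p.2 = n} := by
  have (ij : antidiagonal n) : Finite ({a // f a = ij.1.1} × {a // f a = ij.1.2}) := by
    have hij := mem_antidiagonal.1 ij.2
    have := h ij.1.1 (by omega)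
    have := h ij.1.2 (by omega)
    infer_instance
  exact Finite.of_equiv _ (subtypeAddEqEquivSigmaAntidiagonal f n).symm

namespace BTM

theorem eq_leaf_of_size_eq_zero {T : BTM} (h : T.size = 0) : T = leaf := by
  cases T with
  | leaf => rfl
  | node L k R => simp [size] at h

theorem eq_of_size_eq_one {T : BTM} (h : T.size = 1) : T = node leaf 1 leaf := by
  cases T with
  | leaf => simp [size] at h
  | node L k R =>
    have hk := k.pos
    simp only [size] at h
    rw [eq_leaf_of_size_eq_zero (by omega : L.size = 0),
      eq_leaf_of_size_eq_zero (by omega : R.size = 0),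
      PNat.coe_eq_one_iff.1 (by omega : (k : ℕ) = 1)]

def succRoot : BTM → BTM
  | leaf => leaf
  | node L k R => node L (k + 1) R

theorem succRoot_injective : Function.Injective succRoot := by
  rintro (_ | ⟨L, k, R⟩) (_ | ⟨L', k', R'⟩) h <;> simp_all [succRoot]

theorem size_succRoot {T : BTM} (h : T.size ≠ 0) : (succRoot T).size = T.size + 1 := by
  cases T with
  | leaf => simp [size] at h
  | node L k R => simp only [succRoot, size, PNat.add_coe, PNat.one_coe]; omega

theorem node_one_ne_succRoot (L R T : BTM) : node L 1 R ≠ succRoot T := by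
  cases T with
  | leaf => simp [succRoot]
  | node L' k R' => simpa [succRoot] using fun _ h => absurd h (PNat.lt_add_left 1 k).ne

def ofRootCases (n : ℕ) :
    {p : BTM × BTM // p.1.size + p.2.size = n + 1} ⊕ {T : BTM // T.size = n + 1} →
      {T : BTM // T.size = n + 2}
  | .inl ⟨p, h⟩ => ⟨node p.1 1 p.2, by simp only [size, PNat.one_coe]; omega⟩
  | .inr ⟨T, h⟩ => ⟨succRoot T, by rw [size_succRoot (by omega), h]⟩

theorem bijective_ofRootCases (n : ℕ) : Function.Bijective (ofRootCases n) := by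
  constructor
  · rintro (⟨⟨L, R⟩, _⟩ | ⟨T, _⟩) (⟨⟨L', R'⟩, _⟩ | ⟨T', _⟩) h <;>
      simp only [ofRootCases, Subtype.mk.injEq, node.injEq, true_and] at h
    · simp_all
    · exact absurd h (node_one_ne_succRoot _ _ _)
    · exact absurd h.symm (node_one_ne_succRoot _ _ _)
    · obtain rfl := succRoot_injective h
      rfl
  · rintro ⟨_ | ⟨L, k, R⟩, h⟩
    · simp [size] at h
    · induction k using PNat.recOn with
      | one =>
        have hLR : L.size + R.size = n + 1 := by simp only [size, PNat.one_coe] at h; omega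
        exact ⟨.inl ⟨(L, R), hLR⟩, rfl⟩
      | succ j _ =>
        have hj : (node L j R).size = n + 1 := by
          simp only [size, PNat.add_coe, PNat.one_coe] at h ⊢; omega
        exact ⟨.inr ⟨node L j R, hj⟩, rfl⟩

end BTM

theorem bNum_zero : bNum 0 = 1 :=
  Nat.card_eq_one_iff_exists.2
    ⟨⟨.leaf, rfl⟩, fun T => Subtype.ext (BTM.eq_leaf_of_size_eq_zero T.2)⟩

theorem bNum_one : bNum 1 = 1 :=
  Nat.card_eq_one_iff_exists.2
    ⟨⟨.node .leaf 1 .leaf, rfl⟩, fun T => Subtype.ext (BTM.eq_of_size_eq_one T.2)⟩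

instance BTM.finite_size_eq (n : ℕ) : Finite {T : BTM // T.size = n} := by
  induction n using Nat.strong_induction_on with
  | _ n ih =>
    rcases n with _ | _ | n
    · exact Nat.finite_of_card_ne_zero (bNum_zero.trans_ne one_ne_zero)
    · exact Nat.finite_of_card_ne_zero (bNum_one.trans_ne one_ne_zero)
    · have := finite_subtype_add_eq BTM.size (n + 1) fun i hi => ih i (by omega)
      have := ih (n + 1) (by omega)
      exact Finite.of_surjective _ (BTM.bijective_ofRootCases n).2

instance BTM.finite_size_add_size_eq (n : ℕ) :
    Finite {p : BTM × BTM // p.1.size + p.2.size = n} :=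
  finite_subtype_add_eq BTM.size n fun _ _ => inferInstance

theorem bNum_add_two (n : ℕ) :
    bNum (n + 2) = ∑ ij ∈ antidiagonal (n + 1), bNum ij.1 * bNum ij.2 + bNum (n + 1) := by
  rw [bNum, ← Nat.card_eq_of_bijective _ (BTM.bijective_ofRootCases n), Nat.card_sum,
    card_subtype_add_eq_sum_antidiagonal]
  rfl

theorem Sgen_sub_one_eq : Sgen - 1 = X * Sgen ^ 2 + X * (Sgen - 1) := by
  ext (_ | _ | n)
  · simp [Sgen, bNum_zero]
  · rw [map_add, coeff_succ_X_mul, coeff_succ_X_mul]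
    simp [Sgen, sq, coeff_mul, bNum_zero, bNum_one]
  · rw [map_add, coeff_succ_X_mul, coeff_succ_X_mul]
    simp [Sgen, sq, coeff_mul, bNum_add_two]

theorem btm_generating_series :
    bNum 0 = 1 ∧ bNum 1 = 1 ∧ bNum 2 = 3 ∧ bNum 3 = 10 ∧ bNum 4 = 36 ∧
      bNum 5 = 137 ∧
      (1 - PowerSeries.X) * (Sgen - 1) = PowerSeries.X * Sgen ^ 2 := by
  refine ⟨bNum_zero, bNum_one, ?_, ?_, ?_, ?_, by linear_combination Sgen_sub_one_eq⟩ <;>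
    simp [bNum_add_two, Nat.sum_antidiagonal_succ, bNum_zero, bNum_one]
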